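/- There exists C > 0 such that for every α ∈ [−1,1] and every g ∈ H¹(−1,1) with g(α) = 0, ∫_{−1}^{1} |g(x)/(x−α)| dx ≤ C·(∫_{−1}^{1} |g'(s)|²√(1−s²) ds)^{1/2}. -/

import Mathlib

open MeasureTheory Set intervalIntegral

/-!
Cauchy–Schwarz against the weight `w(t) = √(1 - t²)` gives
`|g x| = |∫_α^x g'| ≤ ‖g'‖_{1,w} (∫_α^x w⁻¹)^{1/2}`. Since one of the factors of
`1 - t² = (1 - t)(1 + t)` is at least `1`, we have `w⁻¹ ≤ (1 - t)^{-1/2} + (1 + t)^{-1/2}`, and the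
subadditivity of `√` then bounds `∫_α^x w⁻¹` by `4 |x - α|^{1/2}`. Hence
`|g x / (x - α)| ≤ 2 ‖g'‖_{1,w} |x - α|^{-3/4}`, whose integral over `[-1, 1]` is at most
`32 ‖g'‖_{1,w}`.
-/

theorem integral_abs_le_sqrt_mul_sqrt_of_weight
    {α : Type*} [MeasurableSpace α] {μ : Measure α} {f w : α → ℝ}
    (hf : AEStronglyMeasurable f μ) (hw : AEStronglyMeasurable w μ) (hw_pos : ∀ᵐ x ∂μ, 0 < w x)
    (hfw : Integrable (fun x => f x ^ 2 * w x) μ) (hw_inv : Integrable (fun x => (w x)⁻¹) μ) :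
    ∫ x, |f x| ∂μ ≤ √(∫ x, f x ^ 2 * w x ∂μ) * √(∫ x, (w x)⁻¹ ∂μ) := by
  set F := fun x => |f x| * √(w x)
  set H := fun x => (√(w x))⁻¹
  have hsqrt_w : AEStronglyMeasurable (fun x => √(w x)) μ :=
    Real.continuous_sqrt.comp_aestronglyMeasurable hw
  have hF_sq : (fun x => F x ^ 2) =ᵐ[μ] fun x => f x ^ 2 * w x := by
    filter_upwards [hw_pos] with x hx
    simp only [F, mul_pow, sq_abs, Real.sq_sqrt hx.le]
  have hH_sq : (fun x => H x ^ 2) =ᵐ[μ] fun x => (w x)⁻¹ := by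
    filter_upwards [hw_pos] with x hx
    simp only [H, inv_pow, Real.sq_sqrt hx.le]
  have hFH : (fun x => F x * H x) =ᵐ[μ] fun x => |f x| := by
    filter_upwards [hw_pos] with x hx
    simp only [F, H, mul_assoc, mul_inv_cancel₀ (Real.sqrt_pos.2 hx).ne', mul_one]
  have hF : MemLp F (ENNReal.ofReal 2) μ := by
    rw [ENNReal.ofReal_ofNat]
    exact (memLp_two_iff_integrable_sq ((continuous_abs.comp_aestronglyMeasurable hf).mul
      hsqrt_w)).2 (hfw.congr hF_sq.symm)
  have hH : MemLp H (ENNReal.ofReal 2) μ := by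
    rw [ENNReal.ofReal_ofNat]
    exact (memLp_two_iff_integrable_sq hsqrt_w.aemeasurable.inv.aestronglyMeasurable).2
      (hw_inv.congr hH_sq.symm)
  have holder := integral_mul_le_Lp_mul_Lq_of_nonneg Real.HolderConjugate.two_two
    (ae_of_all _ fun x => by positivity) (ae_of_all _ fun x => by positivity) hF hH
  simp only [Real.rpow_two, ← Real.sqrt_eq_rpow] at holder
  rwa [integral_congr_ae hFH, integral_congr_ae hF_sq, integral_congr_ae hH_sq] at holder

theorem integral_rpow_sub_one_le {a b s : ℝ} (ha : 0 ≤ a) (hab : a ≤ b) (hs : 0 < s)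
    (hs1 : s ≤ 1) : ∫ u in a..b, u ^ (s - 1) ≤ (b - a) ^ s / s := by
  rw [integral_rpow (Or.inl (by linarith)), sub_add_cancel]
  gcongr
  have := Real.rpow_add_le_add_rpow (sub_nonneg.2 hab) ha hs.le hs1
  rw [sub_add_cancel] at this
  linarith

theorem inv_sqrt_one_sub_sq_le {t : ℝ} (ht : t ∈ Icc (-1 : ℝ) 1) :
    (√(1 - t ^ 2))⁻¹ ≤ (1 - t) ^ ((1 / 2 : ℝ) - 1) + (1 + t) ^ ((1 / 2 : ℝ) - 1) := by
  obtain ⟨ht1, ht2⟩ := ht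
  have inv_sqrt_mul_le : ∀ u v : ℝ, 0 ≤ u → 1 ≤ v → (√(u * v))⁻¹ ≤ u ^ ((1 / 2 : ℝ) - 1) := by
    intro u v hu hv
    rw [show (1 / 2 : ℝ) - 1 = -(1 / 2) by norm_num, Real.rpow_neg hu, ← Real.sqrt_eq_rpow]
    rcases hu.eq_or_lt with rfl | hu
    · simp
    exact inv_anti₀ (Real.sqrt_pos.2 hu) (Real.sqrt_le_sqrt (le_mul_of_one_le_right hu.le hv))
  have hprod : 1 - t ^ 2 = (1 - t) * (1 + t) := by ring
  rcases le_total 0 t with h | h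
  · calc (√(1 - t ^ 2))⁻¹ ≤ (1 - t) ^ ((1 / 2 : ℝ) - 1) := by
          rw [hprod]; exact inv_sqrt_mul_le _ _ (by linarith) (by linarith)
      _ ≤ _ := le_add_of_nonneg_right (Real.rpow_nonneg (by linarith) _)
  · calc (√(1 - t ^ 2))⁻¹ ≤ (1 + t) ^ ((1 / 2 : ℝ) - 1) := by
          rw [hprod, mul_comm]; exact inv_sqrt_mul_le _ _ (by linarith) (by linarith)
      _ ≤ _ := le_add_of_nonneg_left (Real.rpow_nonneg (by linarith) _)

theorem intervalIntegrable_one_sub_rpow {r : ℝ} (hr : -1 < r) (a b : ℝ) :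
    IntervalIntegrable (fun t => (1 - t) ^ r) volume a b := by
  simpa using (intervalIntegrable_rpow' hr (a := 1 - a) (b := 1 - b)).comp_sub_left 1

theorem intervalIntegrable_one_add_rpow {r : ℝ} (hr : -1 < r) (a b : ℝ) :
    IntervalIntegrable (fun t => (1 + t) ^ r) volume a b := by
  simpa using (intervalIntegrable_rpow' hr (a := 1 + a) (b := 1 + b)).comp_add_left 1

theorem intervalIntegrable_inv_sqrt_one_sub_sq :
    IntervalIntegrable (fun t => (√(1 - t ^ 2))⁻¹) volume (-1) 1 := by
  have hr : (-1 : ℝ) < 1 / 2 - 1 := by norm_num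
  refine ((intervalIntegrable_one_sub_rpow hr _ _).add
    (intervalIntegrable_one_add_rpow hr _ _)).mono_fun' (by fun_prop) ?_
  rw [uIoc_of_le (by norm_num)]
  refine ae_restrict_of_forall_mem measurableSet_Ioc fun t ht => ?_
  dsimp only
  rw [Real.norm_of_nonneg (by positivity)]
  exact inv_sqrt_one_sub_sq_le (Ioc_subset_Icc_self ht)

theorem integral_inv_sqrt_one_sub_sq_le {c d : ℝ} (hc : -1 ≤ c) (hcd : c ≤ d) (hd : d ≤ 1) :
    ∫ t in c..d, (√(1 - t ^ 2))⁻¹ ≤ 4 * (d - c) ^ (1 / 2 : ℝ) := by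
  have hr : (-1 : ℝ) < 1 / 2 - 1 := by norm_num
  have h₁ := intervalIntegrable_one_sub_rpow hr c d
  have h₂ := intervalIntegrable_one_add_rpow hr c d
  calc ∫ t in c..d, (√(1 - t ^ 2))⁻¹
      ≤ ∫ t in c..d, ((1 - t) ^ ((1 / 2 : ℝ) - 1) + (1 + t) ^ ((1 / 2 : ℝ) - 1)) :=
        integral_mono_on hcd (intervalIntegrable_inv_sqrt_one_sub_sq.mono_set (by
          rw [uIcc_of_le hcd, uIcc_of_le (by norm_num)]; exact Icc_subset_Icc hc hd)) (h₁.add h₂)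
          fun t ht => inv_sqrt_one_sub_sq_le ⟨hc.trans ht.1, ht.2.trans hd⟩
    _ = (∫ u in 1 - d..1 - c, u ^ ((1 / 2 : ℝ) - 1)) +
          ∫ u in 1 + c..1 + d, u ^ ((1 / 2 : ℝ) - 1) := by
        rw [integral_add h₁ h₂, integral_comp_sub_left (fun u => u ^ ((1 / 2 : ℝ) - 1)),
          integral_comp_add_left (fun u => u ^ ((1 / 2 : ℝ) - 1))]
    _ ≤ (d - c) ^ (1 / 2 : ℝ) / (1 / 2) + (d - c) ^ (1 / 2 : ℝ) / (1 / 2) := by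
        gcongr
        · simpa using integral_rpow_sub_one_le (a := 1 - d) (b := 1 - c) (by linarith)
            (by linarith) (by norm_num : (0 : ℝ) < 1 / 2) (by norm_num)
        · simpa using integral_rpow_sub_one_le (a := 1 + c) (b := 1 + d) (by linarith)
            (by linarith) (by norm_num : (0 : ℝ) < 1 / 2) (by norm_num)
    _ = 4 * (d - c) ^ (1 / 2 : ℝ) := by ring

theorem integral_abs_le_sqrt_weighted_integral_sq_mul_rpow {g' : ℝ → ℝ}
    (hg' : IntervalIntegrable g' volume (-1) 1)
    (hg'2 : IntervalIntegrable (fun s => g' s ^ 2) volume (-1) 1)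
    {c d : ℝ} (hc : -1 ≤ c) (hcd : c ≤ d) (hd : d ≤ 1) :
    ∫ t in c..d, |g' t| ≤
      2 * √(∫ s in (-1 : ℝ)..1, |g' s| ^ 2 * √(1 - s ^ 2)) * (d - c) ^ (1 / 4 : ℝ) := by
  have hsub : Ioo c d ⊆ Ioc (-1) 1 := fun t ht => ⟨hc.trans_lt ht.1, ht.2.le.trans hd⟩
  have hw_pos : ∀ᵐ t ∂volume.restrict (Ioo c d), 0 < √(1 - t ^ 2) :=
    ae_restrict_of_forall_mem measurableSet_Ioo fun t ht =>
      Real.sqrt_pos.2 (by nlinarith [hc.trans_lt ht.1, ht.2.trans_le hd])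
  have hfw : IntegrableOn (fun t => g' t ^ 2 * √(1 - t ^ 2)) (Ioc (-1) 1) :=
    hg'2.1.mul_bdd (by fun_prop) (ae_of_all _ fun t => by
      rw [Real.norm_of_nonneg (Real.sqrt_nonneg _)]
      exact Real.sqrt_le_one.2 (by nlinarith))
  have hweighted : ∫ t in Ioo c d, g' t ^ 2 * √(1 - t ^ 2) ≤
      ∫ s in (-1 : ℝ)..1, |g' s| ^ 2 * √(1 - s ^ 2) := by
    simp only [sq_abs, integral_of_le (show (-1 : ℝ) ≤ 1 by norm_num)]
    exact setIntegral_mono_set hfw (ae_of_all _ fun t => by positivity) hsub.eventuallyLE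
  have hinv : ∫ t in Ioo c d, (√(1 - t ^ 2))⁻¹ ≤ 4 * (d - c) ^ (1 / 2 : ℝ) := by
    rw [← integral_Ioc_eq_integral_Ioo, ← integral_of_le hcd]
    exact integral_inv_sqrt_one_sub_sq_le hc hcd hd
  calc ∫ t in c..d, |g' t| = ∫ t in Ioo c d, |g' t| := by
        rw [integral_of_le hcd, integral_Ioc_eq_integral_Ioo]
    _ ≤ √(∫ t in Ioo c d, g' t ^ 2 * √(1 - t ^ 2)) * √(∫ t in Ioo c d, (√(1 - t ^ 2))⁻¹) :=
        integral_abs_le_sqrt_mul_sqrt_of_weight (hg'.1.mono_set hsub).aestronglyMeasurable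
          (by fun_prop) hw_pos (hfw.mono_set hsub)
          (intervalIntegrable_inv_sqrt_one_sub_sq.1.mono_set hsub)
    _ ≤ √(∫ s in (-1 : ℝ)..1, |g' s| ^ 2 * √(1 - s ^ 2)) * √(4 * (d - c) ^ (1 / 2 : ℝ)) := by
        gcongr
    _ = _ := by
        rw [Real.sqrt_mul (by norm_num), Real.sqrt_eq_rpow ((d - c) ^ _),
          ← Real.rpow_mul (sub_nonneg.2 hcd), show √4 = 2 by
            rw [show (4 : ℝ) = 2 ^ 2 by norm_num, Real.sqrt_sq (by norm_num)],
          show (1 / 2 : ℝ) * (1 / 2) = 1 / 4 by norm_num]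
        ring

theorem intervalIntegrable_abs_sub_rpow {a b c r : ℝ} (hac : a ≤ c) (hcb : c ≤ b) (hr : -1 < r) :
    IntervalIntegrable (fun x => |x - c| ^ r) volume a b := by
  have left : IntervalIntegrable (fun x => |x - c| ^ r) volume a c := by
    refine (intervalIntegrable_congr fun x hx => ?_).2
      (by simpa using (intervalIntegrable_rpow' hr (a := c - a) (b := c - c)).comp_sub_left c)
    rw [uIoc_of_le hac] at hx
    simp only [abs_sub_comm x c, abs_of_nonneg (sub_nonneg.2 hx.2)]
  have right : IntervalIntegrable (fun x => |x - c| ^ r) volume c b := by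
    refine (intervalIntegrable_congr fun x hx => ?_).2
      (by simpa using (intervalIntegrable_rpow' hr (a := c - c) (b := b - c)).comp_sub_right c)
    rw [uIoc_of_le hcb] at hx
    simp only [abs_of_nonneg (sub_nonneg.2 hx.1.le)]
  exact left.trans right

theorem integral_abs_sub_rpow {a b c r : ℝ} (hac : a ≤ c) (hcb : c ≤ b) (hr : -1 < r) :
    ∫ x in a..b, |x - c| ^ r = ((c - a) ^ (r + 1) + (b - c) ^ (r + 1)) / (r + 1) := by
  have hr' : r + 1 ≠ 0 := by linarith
  rw [← integral_add_adjacent_intervals (intervalIntegrable_abs_sub_rpow hac le_rfl hr)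
    (intervalIntegrable_abs_sub_rpow le_rfl hcb hr)]
  have left : ∫ x in a..c, |x - c| ^ r = ∫ x in a..c, (c - x) ^ r :=
    integral_congr fun x hx => by
      rw [uIcc_of_le hac] at hx
      simp only [abs_sub_comm x c, abs_of_nonneg (sub_nonneg.2 hx.2)]
  have right : ∫ x in c..b, |x - c| ^ r = ∫ x in c..b, (x - c) ^ r :=
    integral_congr fun x hx => by
      rw [uIcc_of_le hcb] at hx
      simp only [abs_of_nonneg (sub_nonneg.2 hx.1)]
  rw [left, right, integral_comp_sub_left (fun x => x ^ r),
    integral_comp_sub_right (fun x => x ^ r), sub_self, integral_rpow (Or.inl hr),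
    integral_rpow (Or.inl hr), Real.zero_rpow hr']
  ring

theorem integral_abs_sub_rpow_neg_three_quarters_le {α : ℝ} (hα : α ∈ Icc (-1 : ℝ) 1) :
    ∫ x in (-1 : ℝ)..1, |x - α| ^ (-(3 / 4) : ℝ) ≤ 16 := by
  have hle : ∀ y : ℝ, 0 ≤ y → y ≤ 2 → y ^ (1 / 4 : ℝ) ≤ 2 := fun y hy0 hy2 =>
    calc y ^ (1 / 4 : ℝ) ≤ 2 ^ (1 / 4 : ℝ) := Real.rpow_le_rpow hy0 hy2 (by norm_num)
      _ ≤ 2 ^ (1 : ℝ) := Real.rpow_le_rpow_of_exponent_le (by norm_num) (by norm_num)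
      _ = 2 := Real.rpow_one 2
  rw [integral_abs_sub_rpow hα.1 hα.2 (by norm_num), show (-(3 / 4) : ℝ) + 1 = 1 / 4 by norm_num,
    sub_neg_eq_add, div_le_iff₀ (by norm_num)]
  linarith [hle (α + 1) (by linarith [hα.1]) (by linarith [hα.2]),
    hle (1 - α) (by linarith [hα.2]) (by linarith [hα.1])]

theorem abs_integral_div_sub_le {g' : ℝ → ℝ} (hg' : IntervalIntegrable g' volume (-1) 1)
    (hg'2 : IntervalIntegrable (fun s => g' s ^ 2) volume (-1) 1)
    {α x : ℝ} (hα : α ∈ Icc (-1 : ℝ) 1) (hx : x ∈ Icc (-1 : ℝ) 1) :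
    |(∫ t in α..x, g' t) / (x - α)| ≤
      2 * √(∫ s in (-1 : ℝ)..1, |g' s| ^ 2 * √(1 - s ^ 2)) * |x - α| ^ (-(3 / 4) : ℝ) := by
  have hprimitive : |∫ t in α..x, g' t| ≤
      2 * √(∫ s in (-1 : ℝ)..1, |g' s| ^ 2 * √(1 - s ^ 2)) * |x - α| ^ (1 / 4 : ℝ) := by
    rcases le_total α x with h | h
    · rw [abs_of_nonneg (sub_nonneg.2 h)]
      exact (abs_integral_le_integral_abs h).trans
        (integral_abs_le_sqrt_weighted_integral_sq_mul_rpow hg' hg'2 hα.1 h hx.2)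
    · rw [integral_symm, abs_neg, abs_sub_comm, abs_of_nonneg (sub_nonneg.2 h)]
      exact (abs_integral_le_integral_abs h).trans
        (integral_abs_le_sqrt_weighted_integral_sq_mul_rpow hg' hg'2 hx.1 h hα.2)
  rcases eq_or_ne x α with rfl | hne
  · simp
  have hpos : 0 < |x - α| := abs_pos.2 (sub_ne_zero.2 hne)
  rwa [abs_div, div_le_iff₀ hpos, mul_assoc, ← Real.rpow_add_one hpos.ne',
    show (-(3 / 4) : ℝ) + 1 = 1 / 4 by norm_num]

/-- There exists C > 0 so that for every α ∈ [−1,1] and every g ∈ H¹(−1,1) with g(α) = 0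
(represented by its absolutely continuous representative with square-integrable
derivative g'):
∫_{−1}^1 |g(x)/(x−α)| dx ≤ C·(∫_{−1}^1 |g'(s)|²√(1−s²) ds)^{1/2}. -/
theorem integral_bound_of_vanishing_H1 :
    ∃ C : ℝ, 0 < C ∧ ∀ α ∈ Set.Icc (-1 : ℝ) 1, ∀ g g' : ℝ → ℝ,
      IntervalIntegrable g' MeasureTheory.volume (-1) 1 →
      IntervalIntegrable (fun s => g' s ^ 2) MeasureTheory.volume (-1) 1 →
      (∀ x ∈ Set.Icc (-1 : ℝ) 1, g x = ∫ t in α..x, g' t) →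
      ∫ x in (-1 : ℝ)..1, |g x / (x - α)| ≤
        C * (∫ s in (-1 : ℝ)..1, |g' s| ^ 2 * Real.sqrt (1 - s ^ 2)) ^ ((1 : ℝ) / 2) := by
  refine ⟨32, by norm_num, ?_⟩
  intro α hα g g' hg' hg'2 hg
  set X := ∫ s in (-1 : ℝ)..1, |g' s| ^ 2 * √(1 - s ^ 2)
  have hbound : ∀ x ∈ Ioc (-1 : ℝ) 1, |g x / (x - α)| ≤ 2 * √X * |x - α| ^ (-(3 / 4) : ℝ) :=
    fun x hx => by
      rw [hg x (Ioc_subset_Icc_self hx)]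
      exact abs_integral_div_sub_le hg' hg'2 hα (Ioc_subset_Icc_self hx)
  have hsingular := intervalIntegrable_abs_sub_rpow hα.1 hα.2 (r := -(3 / 4)) (by norm_num)
  calc ∫ x in (-1 : ℝ)..1, |g x / (x - α)|
      ≤ ∫ x in (-1 : ℝ)..1, 2 * √X * |x - α| ^ (-(3 / 4) : ℝ) := by
        -- no integrability of the left-hand side is needed: otherwise its integral is `0`
        simp only [integral_of_le (show (-1 : ℝ) ≤ 1 by norm_num)]
        exact integral_mono_of_nonneg (ae_of_all _ fun _ => abs_nonneg _)
          (hsingular.1.const_mul _) (ae_restrict_of_forall_mem measurableSet_Ioc hbound)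
    _ = 2 * √X * ∫ x in (-1 : ℝ)..1, |x - α| ^ (-(3 / 4) : ℝ) := integral_const_mul _ _
    _ ≤ 2 * √X * 16 := by gcongr; exact integral_abs_sub_rpow_neg_three_quarters_le hα
    _ = 32 * X ^ ((1 : ℝ) / 2) := by rw [← Real.sqrt_eq_rpow]; ring
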